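/- Let m ≥ 1, let y be a partition of [0,1] of size m, let f : [0,1] → [0,1] be a continuous map which is Markov for y, and let N be the incidence matrix of f with respect to y, regarded as a matrix with natural-number entries. Then for every p ≥ 1 and every j = 1,…,m: every entry of the j-th column of N^p is positive if and only if f^p(I_j) = [0,1]. -/

import Mathlib

/-!
By induction on `p`, `(N ^ p) i j > 0` exactly when `I_i ⊆ f^p(I_j)`. The induction step uses the
invariant that every `f^p(I_j)` is either a subsingleton or an interval `[y a, y b]` between
partition points: the continuous image of such an interval is an interval, and each of its
endpoints lies in some `f(I_k) = [y a_k, y b_k]` contained in the image, so it is a partition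
point. For such an `S`, `I_i ⊆ f(S)` iff `I_i ⊆ f(I_k)` for some `I_k ⊆ S`, because an interior
point of `I_i` lying in `f(I_k)` already forces `I_i ⊆ f(I_k)`. Finally, a subset of `[0,1]`
contains every `I_i` iff it is `[0,1]`.
-/

open Set Matrix

/-- A partition of `[0,1]` of size `m`: a strictly increasing map
`{0,1,…,m} → ℝ` with first value `0` and last value `1`. -/
structure UnitPartition (m : ℕ) where
  pts : Fin (m + 1) → ℝ
  strictMono : StrictMono pts
  zero : pts 0 = 0
  one : pts (Fin.last m) = 1

/-- The `j`-th interval `I_j = [y(j-1), y(j)]` of a partition, for `j = 1, …, m`. -/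
def UnitPartition.interval {m : ℕ} (y : UnitPartition m) (j : Fin m) : Set ℝ :=
  Set.Icc (y.pts j.castSucc) (y.pts j.succ)

/-- `f` is Markov for the partition `y`. -/
def IsMarkov {m : ℕ} (y : UnitPartition m) (f : ℝ → ℝ) : Prop :=
  ∀ j : Fin m, ∃ a b : Fin (m + 1), a ≤ b ∧
    f '' y.interval j = Set.Icc (y.pts a) (y.pts b)

open Classical in
/-- The incidence matrix of `f` with respect to `y`, with natural-number entries:
`N i j = 1` if `I_i ⊆ f(I_j)` and `0` otherwise. -/
noncomputable def incidence {m : ℕ} (y : UnitPartition m) (f : ℝ → ℝ) :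
    Matrix (Fin m) (Fin m) ℕ :=
  Matrix.of fun i j => if y.interval i ⊆ f '' y.interval j then 1 else 0

open Classical in
/-- The incidence matrix of `f` with respect to `y`, regarded as a real matrix. -/
noncomputable def incidenceR {m : ℕ} (y : UnitPartition m) (f : ℝ → ℝ) :
    Matrix (Fin m) (Fin m) ℝ :=
  Matrix.of fun i j => if y.interval i ⊆ f '' y.interval j then 1 else 0

lemma Matrix.mul_apply_pos_iff {l n o R : Type*} [Fintype n] [CommSemiring R] [PartialOrder R]
    [CanonicallyOrderedAdd R] [NoZeroDivisors R] (A : Matrix l n R) (B : Matrix n o R)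
    (i : l) (j : o) : 0 < (A * B) i j ↔ ∃ k, 0 < A i k ∧ 0 < B k j := by
  simp [Matrix.mul_apply, Finset.sum_pos_iff, CanonicallyOrderedAdd.mul_pos]

namespace UnitPartition

variable {m : ℕ} (y : UnitPartition m)

/-- A union of consecutive partition intervals `I_k`. -/
def IsSpan (S : Set ℝ) : Prop :=
  ∃ a b : Fin (m + 1), a < b ∧ S = Icc (y.pts a) (y.pts b)

lemma pts_mem_Icc (t : Fin (m + 1)) : y.pts t ∈ Icc (0 : ℝ) 1 :=
  ⟨y.zero ▸ y.strictMono.monotone (Fin.zero_le t),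
    y.one ▸ y.strictMono.monotone (Fin.le_last t)⟩

lemma Icc_pts_subset_Icc_zero_one (a b : Fin (m + 1)) : Icc (y.pts a) (y.pts b) ⊆ Icc 0 1 :=
  Icc_subset_Icc (y.pts_mem_Icc a).1 (y.pts_mem_Icc b).2

lemma interval_subset_Icc_zero_one (k : Fin m) : y.interval k ⊆ Icc 0 1 :=
  y.Icc_pts_subset_Icc_zero_one _ _

lemma isSpan_interval (k : Fin m) : y.IsSpan (y.interval k) :=
  ⟨_, _, Fin.castSucc_lt_succ, rfl⟩

lemma not_subsingleton_interval (k : Fin m) : ¬ (y.interval k).Subsingleton := by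
  simpa [interval] using y.strictMono (Fin.castSucc_lt_succ (i := k))

lemma exists_mem_interval_of_mem_Icc {a : Fin (m + 1)} {z : ℝ} :
    ∀ b : Fin (m + 1), a < b → z ∈ Icc (y.pts a) (y.pts b) →
      ∃ k : Fin m, a ≤ k.castSucc ∧ k.succ ≤ b ∧ z ∈ y.interval k := by
  refine Fin.induction (fun h => absurd h (Fin.not_lt_zero a)) fun k ih hak hz => ?_
  have hak' : a ≤ k.castSucc := Fin.le_castSucc_iff.mpr hak
  by_cases h : a < k.castSucc ∧ z ≤ y.pts k.castSucc
  · obtain ⟨k', h1, h2, h3⟩ := ih h.1 ⟨hz.1, h.2⟩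
    exact ⟨k', h1, h2.trans Fin.castSucc_lt_succ.le, h3⟩
  · refine ⟨k, hak', le_rfl, ?_, hz.2⟩
    rcases hak'.lt_or_eq with hlt | rfl
    · exact (not_le.mp fun hz' => h ⟨hlt, hz'⟩).le
    · exact hz.1

lemma isSpan_Icc_zero_one : y.IsSpan (Icc 0 1) :=
  ⟨0, Fin.last m, y.strictMono.lt_iff_lt.mp (by rw [y.zero, y.one]; exact one_pos),
    by rw [y.zero, y.one]⟩

variable {y} in
lemma IsSpan.exists_interval_subset_mem {S : Set ℝ} (hS : y.IsSpan S) {z : ℝ} (hz : z ∈ S) :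
    ∃ k, y.interval k ⊆ S ∧ z ∈ y.interval k := by
  obtain ⟨a, b, hab, rfl⟩ := hS
  obtain ⟨k, hak, hkb, hzk⟩ := y.exists_mem_interval_of_mem_Icc b hab hz
  exact ⟨k, Icc_subset_Icc (y.strictMono.monotone hak) (y.strictMono.monotone hkb), hzk⟩

lemma forall_interval_subset_iff {T : Set ℝ} (hT : T ⊆ Icc 0 1) :
    (∀ k, y.interval k ⊆ T) ↔ T = Icc 0 1 := by
  refine ⟨fun h => hT.antisymm fun z hz => ?_, fun h k => h ▸ y.interval_subset_Icc_zero_one k⟩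
  obtain ⟨k, -, hzk⟩ := y.isSpan_Icc_zero_one.exists_interval_subset_mem hz
  exact h k hzk

lemma interval_subset_Icc_of_mem {k : Fin m} {a b : Fin (m + 1)} {x : ℝ}
    (hx : x ∈ Ioo (y.pts k.castSucc) (y.pts k.succ)) (hab : x ∈ Icc (y.pts a) (y.pts b)) :
    y.interval k ⊆ Icc (y.pts a) (y.pts b) := by
  have ha : a ≤ k.castSucc :=
    Fin.le_castSucc_iff.mpr (y.strictMono.lt_iff_lt.mp (hab.1.trans_lt hx.2))
  have hb : k.succ ≤ b :=
    Fin.castSucc_lt_iff_succ_le.mp (y.strictMono.lt_iff_lt.mp (hx.1.trans_le hab.2))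
  exact Icc_subset_Icc (y.strictMono.monotone ha) (y.strictMono.monotone hb)

end UnitPartition

lemma incidence_pos_iff {m : ℕ} (y : UnitPartition m) (f : ℝ → ℝ) (i j : Fin m) :
    0 < incidence y f i j ↔ y.interval i ⊆ f '' y.interval j := by
  rw [incidence, Matrix.of_apply]
  split_ifs with h <;> simp [h]

namespace IsMarkov

variable {m : ℕ} {y : UnitPartition m} {f : ℝ → ℝ}

lemma interval_subset_image_iff (hf : IsMarkov y f) {S : Set ℝ}
    (hS : y.IsSpan S ∨ S.Subsingleton) (i : Fin m) :
    y.interval i ⊆ f '' S ↔ ∃ k, y.interval i ⊆ f '' y.interval k ∧ y.interval k ⊆ S := by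
  refine ⟨fun h => ?_, fun ⟨k, hik, hkS⟩ => hik.trans (image_mono hkS)⟩
  rcases hS with hS | hS
  · obtain ⟨x, hx⟩ := nonempty_Ioo.mpr (y.strictMono (Fin.castSucc_lt_succ (i := i)))
    obtain ⟨z, hz, rfl⟩ := h (Ioo_subset_Icc_self hx)
    obtain ⟨k, hkS, hzk⟩ := hS.exists_interval_subset_mem hz
    obtain ⟨a, b, -, hk⟩ := hf k
    refine ⟨k, ?_, hkS⟩
    rw [hk]
    exact y.interval_subset_Icc_of_mem hx (hk ▸ mem_image_of_mem f hzk)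
  · exact absurd ((hS.image f).anti h) (y.not_subsingleton_interval i)

lemma exists_pts_eq_of_isLeast (hf : IsMarkov y f) {S : Set ℝ} (hS : y.IsSpan S) {c : ℝ}
    (hc : IsLeast (f '' S) c) : ∃ a, y.pts a = c := by
  obtain ⟨z, hz, hzc⟩ := hc.1
  obtain ⟨k, hkS, hzk⟩ := hS.exists_interval_subset_mem hz
  obtain ⟨a, b, hab, hk⟩ := hf k
  have ha : y.pts a ∈ f '' S :=
    image_mono hkS (hk ▸ left_mem_Icc.mpr (y.strictMono.monotone hab))
  have hck : c ∈ Icc (y.pts a) (y.pts b) := hk ▸ hzc ▸ mem_image_of_mem f hzk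
  exact ⟨a, le_antisymm hck.1 (hc.2 ha)⟩

lemma exists_pts_eq_of_isGreatest (hf : IsMarkov y f) {S : Set ℝ} (hS : y.IsSpan S) {d : ℝ}
    (hd : IsGreatest (f '' S) d) : ∃ b, y.pts b = d := by
  obtain ⟨z, hz, hzd⟩ := hd.1
  obtain ⟨k, hkS, hzk⟩ := hS.exists_interval_subset_mem hz
  obtain ⟨a, b, hab, hk⟩ := hf k
  have hb : y.pts b ∈ f '' S :=
    image_mono hkS (hk ▸ right_mem_Icc.mpr (y.strictMono.monotone hab))
  have hdk : d ∈ Icc (y.pts a) (y.pts b) := hk ▸ hzd ▸ mem_image_of_mem f hzk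
  exact ⟨b, le_antisymm (hd.2 hb) hdk.2⟩

lemma image_isSpan_or_subsingleton (hf : IsMarkov y f) (hcont : ContinuousOn f (Icc 0 1))
    {S : Set ℝ} (hS : y.IsSpan S ∨ S.Subsingleton) :
    y.IsSpan (f '' S) ∨ (f '' S).Subsingleton := by
  rcases hS with hspan | hS
  · obtain ⟨c, d, hcd⟩ : ∃ c d, f '' S = Icc c d := by
      obtain ⟨a, b, hab, rfl⟩ := hspan
      exact ⟨_, _, (hcont.mono (y.Icc_pts_subset_Icc_zero_one a b)).image_Icc (y.strictMono hab).le⟩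
    rcases le_or_gt d c with hdc | hcd'
    · exact .inr (hcd ▸ subsingleton_Icc_of_ge hdc)
    obtain ⟨A, rfl⟩ := hf.exists_pts_eq_of_isLeast hspan (hcd ▸ isLeast_Icc hcd'.le)
    obtain ⟨B, rfl⟩ := hf.exists_pts_eq_of_isGreatest hspan (hcd ▸ isGreatest_Icc hcd'.le)
    exact .inl ⟨A, B, y.strictMono.lt_iff_lt.mp hcd', hcd⟩
  · exact .inr (hS.image f)

lemma iterate_image_interval (hf : IsMarkov y f) (hcont : ContinuousOn f (Icc 0 1))
    (p : ℕ) (j : Fin m) :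
    y.IsSpan (f^[p] '' y.interval j) ∨ (f^[p] '' y.interval j).Subsingleton := by
  induction p with
  | zero => simpa using .inl (y.isSpan_interval j)
  | succ p ih =>
    rw [Function.iterate_succ', image_comp]
    exact hf.image_isSpan_or_subsingleton hcont ih

lemma incidence_pow_succ_pos_iff (hf : IsMarkov y f) (hcont : ContinuousOn f (Icc 0 1))
    (p : ℕ) (i j : Fin m) :
    0 < (incidence y f ^ (p + 1)) i j ↔ y.interval i ⊆ f^[p + 1] '' y.interval j := by
  induction p generalizing i with
  | zero => simpa using incidence_pos_iff y f i j
  | succ p ih =>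
    rw [pow_succ', Matrix.mul_apply_pos_iff, Function.iterate_succ', image_comp]
    simp_rw [incidence_pos_iff, ih]
    exact (hf.interval_subset_image_iff (hf.iterate_image_interval hcont (p + 1) j) i).symm

end IsMarkov

theorem incidence_pow_column_pos_iff_onto_general
    (m : ℕ) (y : UnitPartition m) (f : ℝ → ℝ)
    (hmaps : Set.MapsTo f (Set.Icc 0 1) (Set.Icc 0 1))
    (hcont : ContinuousOn f (Set.Icc 0 1))
    (hMarkov : IsMarkov y f) :
    ∀ p : ℕ, 1 ≤ p → ∀ j : Fin m,
      (∀ i : Fin m, 0 < (incidence y f ^ p) i j) ↔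
        f^[p] '' y.interval j = Set.Icc (0 : ℝ) 1 := by
  intro p hp j
  obtain ⟨q, rfl⟩ := Nat.exists_eq_add_of_le' hp
  simp_rw [hMarkov.incidence_pow_succ_pos_iff hcont]
  exact y.forall_interval_subset_iff
    ((hmaps.iterate _).mono_left (y.interval_subset_Icc_zero_one j)).image_subset

theorem incidence_pow_column_pos_iff_onto
    (m : ℕ) (hm : 1 ≤ m) (y : UnitPartition m) (f : ℝ → ℝ)
    (hmaps : Set.MapsTo f (Set.Icc 0 1) (Set.Icc 0 1))
    (hcont : ContinuousOn f (Set.Icc 0 1))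
    (hMarkov : IsMarkov y f) :
    ∀ p : ℕ, 1 ≤ p → ∀ j : Fin m,
      (∀ i : Fin m, 0 < (incidence y f ^ p) i j) ↔
        f^[p] '' y.interval j = Set.Icc (0 : ℝ) 1 :=
  incidence_pow_column_pos_iff_onto_general m y f hmaps hcont hMarkov
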